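/- Let {R,F} be a compatible pair of Yang–Baxter matrices on V = ℂ^N and ε ∈ {1,−1}. Then the assignment α_ε(M₁)₀ := R₀₁^ε F₀₁ defines a representation of the quantum matrix algebra: on V₀⊗V₁⊗V₂ one has R₁₂ · (R^εF)₀₁ · (F₁₂(R^εF)₀₁F₁₂⁻¹) = (R^εF)₀₁ · (F₁₂(R^εF)₀₁F₁₂⁻¹) · R₁₂, i.e. the N×N matrix X over End(V) with entries (X^a_b)^i_j := (R^εF)^{ia}_{jb} satisfies the defining relation R₁X_{1̄}X_{2̄} = X_{1̄}X_{2̄}R₁ of a quantum matrix for {R,F}. -/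

import Mathlib

open Matrix BigOperators
open scoped Classical

noncomputable section

/-- Operators on `V^{⊗n}`, `V = ℂ^N`, with entries in `A`. -/
abbrev Op (N n : ℕ) (A : Type*) := Matrix (Fin n → Fin N) (Fin n → Fin N) A

variable {N : ℕ}

/-- Embedding of a two-site operator at tensor factors `i`, `j` (identity elsewhere). -/
def emb2 {A : Type*} [Semiring A] {n : ℕ} (i j : Fin n) (X : Op N 2 A) : Op N n A :=
  fun f g => if ∀ k, k ≠ i → k ≠ j → f k = g k then X ![f i, f j] ![g i, g j] else 0

/-- `X_p`: a two-site operator acting at the adjacent factors `p`, `p+1` (0-based). -/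
def opAt {A : Type*} [Semiring A] (n p : ℕ) (X : Op N 2 A) : Op N n A :=
  if h : p + 1 < n then emb2 ⟨p, Nat.lt_of_succ_lt h⟩ ⟨p + 1, h⟩ X else 1

/-- Embedding of a one-site operator at tensor factor `i`. -/
def emb1 {A : Type*} [Semiring A] {n : ℕ} (i : Fin n) (Z : Matrix (Fin N) (Fin N) A) :
    Op N n A :=
  fun f g => if ∀ k, k ≠ i → f k = g k then Z (f i) (g i) else 0

/-- `Z_p`: a one-site operator acting at factor `p` (0-based). -/
def matAt {A : Type*} [Semiring A] (n p : ℕ) (Z : Matrix (Fin N) (Fin N) A) : Op N n A :=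
  if h : p < n then emb1 ⟨p, h⟩ Z else 1

/-- Partial trace over the factors in `S`, re-embedded with identity on the factors in `S`. -/
def ptr {A : Type*} [Semiring A] {n : ℕ} (S : Finset (Fin n)) (X : Op N n A) : Op N n A :=
  fun f g =>
    if ∀ k ∈ S, f k = g k then
      ∑ h : Fin n → Fin N,
        if ∀ k, k ∉ S → h k = f k then X h (fun k => if k ∈ S then h k else g k) else 0
    else 0

/-- Full trace. -/
def trAll {A : Type*} [Semiring A] {n : ℕ} (X : Op N n A) : A := ∑ f, X f f

/-- Trace over all tensor factors except the factor `0`, yielding an `N×N` matrix. -/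
def trRest {n : ℕ} (X : Op N (n + 1) ℂ) : Matrix (Fin N) (Fin N) ℂ :=
  fun a b => ∑ f : Fin n → Fin N, X (Fin.cons a f) (Fin.cons b f)

/-- The permutation (flip) operator on `V ⊗ V`. -/
def flipP (N : ℕ) : Op N 2 ℂ := fun f g => if f 0 = g 1 ∧ f 1 = g 0 then 1 else 0

/-- `D_R = Tr_(2) Ψ_R`. -/
def Dmat (Ψ : Op N 2 ℂ) : Matrix (Fin N) (Fin N) ℂ := fun a b => ∑ c, Ψ ![a, c] ![b, c]

/-- The product `∏_{k ∈ S} (Dm)_k` of copies of a one-site operator over the factors in `S`. -/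
def Dset {n : ℕ} (Dm : Matrix (Fin N) (Fin N) ℂ) (S : Finset (Fin n)) : Op N n ℂ :=
  fun f g => if ∀ k, k ∉ S → f k = g k then ∏ k ∈ S, Dm (f k) (g k) else 0

/-- `R` is an (invertible) Yang-Baxter matrix. -/
def IsYB (R : Op N 2 ℂ) : Prop :=
  IsUnit R ∧
    opAt 3 0 R * opAt 3 1 R * opAt 3 0 R = opAt 3 1 R * opAt 3 0 R * opAt 3 1 R

/-- `Ψ` is a skew inverse of `R`:  `Tr_(2) R₁ Ψ₂ = Tr_(2) Ψ₁ R₂ = P`. -/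
def IsSkewPair (R Ψ : Op N 2 ℂ) : Prop :=
  ptr {1} (opAt 3 0 R * opAt 3 1 Ψ) = emb2 (0 : Fin 3) (2 : Fin 3) (flipP N) ∧
  ptr {1} (opAt 3 0 Ψ * opAt 3 1 R) = emb2 (0 : Fin 3) (2 : Fin 3) (flipP N)

/-- q-number `(i)_q`. -/
def qnum (q : ℂ) (i : ℕ) : ℂ := (q ^ i - q⁻¹ ^ i) / (q - q⁻¹)

/-- `η = (q−μ)(q⁻¹+μ)/(μ(q−q⁻¹))`. -/
def etaC (q μ : ℂ) : ℂ := (q - μ) * (q⁻¹ + μ) / (μ * (q - q⁻¹))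

/-- `K = (q·Id − R)(q⁻¹·Id + R)/(μ(q−q⁻¹))`. -/
def Kmat (q μ : ℂ) (R : Op N 2 ℂ) : Op N 2 ℂ :=
  (μ * (q - q⁻¹))⁻¹ • ((q • (1 : Op N 2 ℂ) - R) * (q⁻¹ • (1 : Op N 2 ℂ) + R))

/-- Baxterized element `R⁻(x)`. -/
def Rminus (q μ : ℂ) (R : Op N 2 ℂ) (x : ℂ) : Op N 2 ℂ :=
  (1 : Op N 2 ℂ) + ((x - 1) / (q - q⁻¹)) • R + (μ * (x - 1) / (μ + q * x)) • Kmat q μ R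

/-- Base conditions on the parameters `q`, `μ`. -/
def ParamOK (q μ : ℂ) : Prop :=
  q ≠ 0 ∧ q ≠ 1 ∧ q ≠ -1 ∧ μ ≠ 0 ∧ μ ≠ q ∧ μ ≠ -q⁻¹

/-- Conditions `q^{2j} ≠ 1`, `μ ≠ −q^{−2j+3}` for `j = 2, …, k`. -/
def ParamRange (q μ : ℂ) (k : ℕ) : Prop :=
  ∀ j, 2 ≤ j → j ≤ k → q ^ (2 * j) ≠ 1 ∧ μ ≠ -q ^ (3 - 2 * (j : ℤ))

/-- `R` (with inverse `Rinv`) is a BMW-type Yang-Baxter matrix with parameters `q, μ`. -/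
def IsBMW (q μ : ℂ) (R Rinv : Op N 2 ℂ) : Prop :=
  R * Rinv = 1 ∧ Rinv * R = 1 ∧
  R * Kmat q μ R = μ • Kmat q μ R ∧ Kmat q μ R * R = μ • Kmat q μ R ∧
  Kmat q μ R * Kmat q μ R = etaC q μ • Kmat q μ R ∧
  (opAt 3 0 (Kmat q μ R) * opAt 3 1 (Kmat q μ R) * opAt 3 0 (Kmat q μ R)
      = opAt 3 0 (Kmat q μ R)) ∧
  (opAt 3 1 (Kmat q μ R) * opAt 3 0 (Kmat q μ R) * opAt 3 1 (Kmat q μ R)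
      = opAt 3 1 (Kmat q μ R)) ∧
  ∀ E E' : Op N 2 ℂ, (E = R ∧ E' = Rinv) ∨ (E = Rinv ∧ E' = R) →
    (opAt 3 0 (Kmat q μ R) * opAt 3 1 E
        = opAt 3 0 (Kmat q μ R) * opAt 3 1 (Kmat q μ R) * opAt 3 0 E' ∧
     opAt 3 1 (Kmat q μ R) * opAt 3 0 E
        = opAt 3 1 (Kmat q μ R) * opAt 3 0 (Kmat q μ R) * opAt 3 1 E' ∧
     opAt 3 1 E * opAt 3 0 (Kmat q μ R)
        = opAt 3 0 E' * opAt 3 1 (Kmat q μ R) * opAt 3 0 (Kmat q μ R) ∧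
     opAt 3 0 E * opAt 3 1 (Kmat q μ R)
        = opAt 3 1 E' * opAt 3 0 (Kmat q μ R) * opAt 3 1 (Kmat q μ R))

/-- q-antisymmetrizer `A^{(m)}` acting on the `m` factors starting at factor `p` (0-based)
of `V^{⊗n}`. -/
def asym (q μ : ℂ) (R : Op N 2 ℂ) (n : ℕ) : ℕ → ℕ → Op N n ℂ
  | _, 0 => 1
  | _, 1 => 1
  | p, (m + 2) =>
      (q ^ (m + 1) / qnum q (m + 2)) •
        (asym q μ R n p (m + 1) * opAt n (p + m) (Rminus q μ R ((q ^ (2 * (m + 1)))⁻¹)) *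
          asym q μ R n p (m + 1))

/-- The contractor `C^{(2i)}` acting on the `2i` factors starting at factor `p` (0-based)
of `V^{⊗n}`; `contr q μ R n p i = C^{(2i)}`. -/
def contr (q μ : ℂ) (R : Op N 2 ℂ) (n : ℕ) : ℕ → ℕ → Op N n ℂ
  | _, 0 => 1
  | p, 1 => (etaC q μ)⁻¹ • opAt n p (Kmat q μ R)
  | p, (i + 2) =>
      contr q μ R n (p + 1) (i + 1) * opAt n p (Kmat q μ R) *
        opAt n (p + 2 * i + 2) (Kmat q μ R) * contr q μ R n (p + 1) (i + 1)

/-- `R` has height `k`. -/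
def HasHeight (q μ : ℂ) (R : Op N 2 ℂ) (k : ℕ) : Prop :=
  2 ≤ k ∧ (∀ i, 2 ≤ i → i ≤ k → asym q μ R k 0 i ≠ 0) ∧
    asym q μ R (k + 1) 1 k * opAt (k + 1) 0 (Rminus q μ R ((q ^ (2 * k))⁻¹)) *
      asym q μ R (k + 1) 1 k = 0

/-- `R` is of orthogonal type `O(k)`: BMW type, height `k`, `μ = q^{1−k}`, `rk A^{(k)} = 1`. -/
def IsOrth (q μ : ℂ) (R Rinv : Op N 2 ℂ) (k : ℕ) : Prop :=
  IsBMW q μ R Rinv ∧ HasHeight q μ R k ∧ μ = q ^ (1 - (k : ℤ)) ∧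
    (asym q μ R k 0 k).rank = 1

/-- `{R,F}` is a compatible pair:  `R₁F₂F₁ = F₂F₁R₂` and `R₂F₁F₂ = F₁F₂R₁`. -/
def CompatPair (R F : Op N 2 ℂ) : Prop :=
  opAt 3 0 R * opAt 3 1 F * opAt 3 0 F = opAt 3 1 F * opAt 3 0 F * opAt 3 1 R ∧
  opAt 3 1 R * opAt 3 0 F * opAt 3 1 F = opAt 3 0 F * opAt 3 1 F * opAt 3 0 R

/-- Push a numeric operator into an `A`-valued operator. -/
def toA {A : Type*} [Semiring A] [Algebra ℂ A] {n : ℕ} (X : Op N n ℂ) : Op N n A :=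
  X.map (algebraMap ℂ A)

/-- The copies `M_{\bar{i+1}}` of a quantum matrix:  `Mbar F Finv M n i = M_{\overline{i+1}}`. -/
def Mbar {A : Type*} [Semiring A] [Algebra ℂ A] (F Finv : Op N 2 ℂ)
    (M : Matrix (Fin N) (Fin N) A) (n : ℕ) : ℕ → Op N n A
  | 0 => matAt n 0 M
  | (i + 1) => toA (opAt n i F) * Mbar F Finv M n i * toA (opAt n i Finv)

/-- The string `M_{1̄} M_{2̄} ⋯ M_{j̄}`. -/
def Mstr {A : Type*} [Semiring A] [Algebra ℂ A] (F Finv : Op N 2 ℂ)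
    (M : Matrix (Fin N) (Fin N) A) (n : ℕ) : ℕ → Op N n A
  | 0 => 1
  | (j + 1) => Mstr F Finv M n j * Mbar F Finv M n j

/-- `M` is a quantum matrix for the pair `{R,F}`. -/
def IsQMatrix {A : Type*} [Semiring A] [Algebra ℂ A] (R F Finv : Op N 2 ℂ)
    (M : Matrix (Fin N) (Fin N) A) : Prop :=
  toA (opAt 2 0 R) * Mbar F Finv M 2 0 * Mbar F Finv M 2 1 =
    Mbar F Finv M 2 0 * Mbar F Finv M 2 1 * toA (opAt 2 0 R)

/-- The contraction `g = η⁻¹ Tr_{R(1,2)}(M_{1̄}M_{2̄}K₁)`. -/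
def qContr (q μ : ℂ) (R F Finv : Op N 2 ℂ) (Dm : Matrix (Fin N) (Fin N) ℂ)
    {A : Type*} [Semiring A] [Algebra ℂ A] (M : Matrix (Fin N) (Fin N) A) : A :=
  (etaC q μ)⁻¹ •
    trAll (toA (Dset Dm (Finset.univ : Finset (Fin 2))) *
      (Mstr F Finv M 2 2 * toA (opAt 2 0 (Kmat q μ R))))

/-- The elementary sums `e_i = Tr_{R(1,…,i)}(M_{1̄}⋯M_{ī} A^{(i)})`. -/
def elemSum (q μ : ℂ) (R F Finv : Op N 2 ℂ) (Dm : Matrix (Fin N) (Fin N) ℂ)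
    {A : Type*} [Semiring A] [Algebra ℂ A] (M : Matrix (Fin N) (Fin N) A) (i : ℕ) : A :=
  trAll (toA (Dset Dm (Finset.univ : Finset (Fin i))) *
    (Mstr F Finv M i i * toA (asym q μ R i 0 i)))

/-- The increasing string `F₁F₂⋯F_j` (1-based), i.e. positions `0,…,j-1`. -/
def Fstr (n : ℕ) (F : Op N 2 ℂ) : ℕ → Op N n ℂ
  | 0 => 1
  | (j + 1) => Fstr n F j * opAt n j F

/-- The decreasing string `F_j⋯F₂F₁` (1-based), i.e. positions `j-1,…,0`. -/
def FstrDown (n : ℕ) (F : Op N 2 ℂ) : ℕ → Op N n ℂ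
  | 0 => 1
  | (j + 1) => opAt n j F * FstrDown n F j

/-- The operator `O`. -/
def Oop (q μ : ℂ) (R Finv : Op N 2 ℂ) (k : ℕ) : Matrix (Fin N) (Fin N) ℂ :=
  (qnum q k * (1 + q ^ ((2 : ℤ) - (k : ℤ))) / (q + q ^ ((1 : ℤ) - (k : ℤ)))) •
    trRest (asym q μ R (k + 1) 1 k * Fstr (k + 1) Finv k)

/-- The operator `O⁻¹`. -/
def OopInv (q μ : ℂ) (R F : Op N 2 ℂ) (k : ℕ) : Matrix (Fin N) (Fin N) ℂ :=
  (qnum q k * (1 + q ^ ((2 : ℤ) - (k : ℤ))) / (q + q ^ ((1 : ℤ) - (k : ℤ)))) •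
    trRest (FstrDown (k + 1) F k * asym q μ R (k + 1) 1 k)

/-- The matrix `G`, `G₁ = Tr_(2,3)(K₂F₁⁻¹F₂⁻¹)`. -/
def Gmat (q μ : ℂ) (R Finv : Op N 2 ℂ) : Matrix (Fin N) (Fin N) ℂ :=
  trRest (opAt 3 1 (Kmat q μ R) * opAt 3 0 Finv * opAt 3 1 Finv)

/-- The matrix `G⁻¹`, `(G⁻¹)₁ = Tr_(2,3)(F₂F₁K₂)`. -/
def GmatInv (q μ : ℂ) (R F : Op N 2 ℂ) : Matrix (Fin N) (Fin N) ℂ :=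
  trRest (opAt 3 1 F * opAt 3 0 F * opAt 3 1 (Kmat q μ R))

/-! With `E = R^ε` and `X₀₁`, `X₁₂` the two embeddings into `End(V^{⊗3})`, the product of the
two copies of `α_ε(M)` collapses to `E₀₁E₁₂F₁₂F₀₁`: compatibility moves `F₀₁F₁₂` past `E₀₁`
(turning it into `E₁₂`), and the braid relation of `F` finishes the job. Now `R₁₂` passes
through `E₀₁E₁₂` by the braid relation of `R` (inverted when `ε = -1`), becoming `R₀₁`, and
`R₀₁` passes through `F₁₂F₀₁` by compatibility, becoming `R₁₂` again. Since the embeddings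
are multiplicative, everything is a computation in the monoid `End(V^{⊗3})`. -/

section Embedding

variable {A : Type*} [Semiring A] {n : ℕ} {i j : Fin n}

def splitTwoSites (hij : i ≠ j) :
    (Fin n → Fin N) ≃ (Fin 2 → Fin N) × ({k // k ≠ i ∧ k ≠ j} → Fin N) where
  toFun f := (![f i, f j], fun k => f k)
  invFun w k := if hi : k = i then w.1 0 else if hj : k = j then w.1 1 else w.2 ⟨k, hi, hj⟩
  left_inv f := by
    funext k
    by_cases hi : k = i
    · subst hi; simp
    · by_cases hj : k = j
      · subst hj; simp [hi]
      · simp [hi, hj]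
  right_inv w := by
    refine Prod.ext (funext fun x => ?_) (funext fun k => ?_)
    · fin_cases x <;> simp [hij.symm]
    · simp [k.2.1, k.2.2]

theorem emb2_eq_submatrix_blockDiagonal (hij : i ≠ j) (X : Op N 2 A) :
    emb2 i j X = (blockDiagonal fun _ => X).submatrix (splitTwoSites hij) (splitTwoSites hij) := by
  ext f g
  simp [emb2, splitTwoSites, blockDiagonal_apply, funext_iff, and_imp]

theorem emb2_one (hij : i ≠ j) : emb2 i j (1 : Op N 2 A) = 1 := by
  rw [emb2_eq_submatrix_blockDiagonal hij]
  exact (congrArg (submatrix · _ _) blockDiagonal_one).trans (submatrix_one_equiv _)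

theorem emb2_mul (hij : i ≠ j) (X Y : Op N 2 A) :
    emb2 i j (X * Y) = emb2 i j X * emb2 i j Y := by
  simp only [emb2_eq_submatrix_blockDiagonal hij, submatrix_mul_equiv, blockDiagonal_mul]

theorem opAt_one (n p : ℕ) : opAt (N := N) n p (1 : Op N 2 A) = 1 := by
  unfold opAt
  split_ifs
  · exact emb2_one (Fin.ne_of_val_ne (Nat.succ_ne_self p).symm)
  · rfl

theorem opAt_mul (n p : ℕ) (X Y : Op N 2 A) : opAt n p (X * Y) = opAt n p X * opAt n p Y := by
  unfold opAt
  split_ifs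
  · exact emb2_mul (Fin.ne_of_val_ne (Nat.succ_ne_self p).symm) X Y
  · rw [mul_one]

def opAtHom (n p : ℕ) : Op N 2 A →* Op N n A where
  toFun := opAt n p
  map_one' := opAt_one n p
  map_mul' := opAt_mul n p

end Embedding

section Monoid

variable {M : Type*} [Monoid M] {aR bR aF bF bF' aE bE : M}

theorem twisted_square_eq (hbF : bF * bF' = 1) (hF : aF * bF * aF = bF * aF * bF)
    (hEF : SemiconjBy (aF * bF) aE bE) :
    aE * aF * (bF * (aE * aF) * bF') = aE * bE * (bF * aF) :=
  calc aE * aF * (bF * (aE * aF) * bF') = aE * ((aF * bF) * aE) * aF * bF' := by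
        simp only [mul_assoc]
    _ = aE * bE * (aF * bF * aF) * bF' := by rw [hEF.eq]; simp only [mul_assoc]
    _ = aE * bE * (bF * aF) := by rw [hF]; simp only [mul_assoc, hbF, mul_one]

theorem commute_twisted_square (hbF : bF * bF' = 1) (hF : aF * bF * aF = bF * aF * bF)
    (hEF : SemiconjBy (aF * bF) aE bE) (hRE : SemiconjBy (aE * bE) aR bR)
    (hRF : SemiconjBy (bF * aF) bR aR) :
    Commute bR (aE * aF * (bF * (aE * aF) * bF')) := by
  rw [twisted_square_eq hbF hF hEF]
  exact (hRE.mul_left hRF).symm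

end Monoid

theorem alpha_representation_general
    {N : ℕ} (R Rinv F Finv : Op N 2 ℂ)
    (hRyb : IsYB R) (hFyb : IsYB F)
    (hR : R * Rinv = 1)
    (hF : F * Finv = 1)
    (hcomp : CompatPair R F) :
    ∀ E : Op N 2 ℂ, E = R ∨ E = Rinv →
      opAt 3 1 R * opAt 3 0 (E * F) *
          (opAt 3 1 F * opAt 3 0 (E * F) * opAt 3 1 Finv) =
        opAt 3 0 (E * F) * (opAt 3 1 F * opAt 3 0 (E * F) * opAt 3 1 Finv) *
          opAt 3 1 R := by
  intro E hE
  let uR : (Op N 2 ℂ)ˣ := ⟨R, Rinv, hR, mul_eq_one_comm.mp hR⟩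
  let aR := Units.map (opAtHom 3 0) uR
  let bR := Units.map (opAtHom 3 1) uR
  have hRF : SemiconjBy (opAt 3 1 F * opAt 3 0 F) (opAt 3 1 R) (opAt 3 0 R) :=
    hcomp.1.symm.trans (mul_assoc _ _ _)
  have hEF : SemiconjBy (opAt 3 0 F * opAt 3 1 F) (opAt 3 0 E) (opAt 3 1 E) := by
    have hFR : SemiconjBy (opAt 3 0 F * opAt 3 1 F) (aR : Op N 3 ℂ) bR :=
      hcomp.2.symm.trans (mul_assoc _ _ _)
    rcases hE with rfl | rfl
    · exact hFR
    · exact hFR.units_inv_right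
  have hRE : SemiconjBy (opAt 3 0 E * opAt 3 1 E) (opAt 3 0 R) (opAt 3 1 R) := by
    have hbraid : SemiconjBy (↑(bR * aR) : Op N 3 ℂ) bR aR := hRyb.2.symm.trans (mul_assoc _ _ _)
    rcases hE with rfl | rfl
    · exact hRyb.2.trans (mul_assoc _ _ _)
    · exact hbraid.units_inv_symm_left
  have hbF : opAt 3 1 F * opAt 3 1 Finv = 1 := by rw [← opAt_mul, hF, opAt_one]
  rw [opAt_mul 3 0 E F]
  exact (mul_assoc _ _ _).trans (commute_twisted_square hbF hFyb.2 hEF hRE hRF).eq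

/-- Proposition 4.18: for a compatible pair `{R,F}` of Yang-Baxter
matrices and `ε = ±1` (encoded by `E ∈ {R, R⁻¹}`), the assignment
`α_ε(M₁)₀ = R₀₁^εF₀₁` defines a representation of the quantum matrix algebra:
`R₁₂·(R^εF)₀₁·(F₁₂(R^εF)₀₁F₁₂⁻¹) = (R^εF)₀₁·(F₁₂(R^εF)₀₁F₁₂⁻¹)·R₁₂`. -/
theorem alpha_representation
    {N : ℕ} (R Rinv F Finv : Op N 2 ℂ)
    (hRyb : IsYB R) (hFyb : IsYB F)
    (hR : R * Rinv = 1) (hR' : Rinv * R = 1)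
    (hF : F * Finv = 1) (hF' : Finv * F = 1)
    (hcomp : CompatPair R F) :
    ∀ E : Op N 2 ℂ, E = R ∨ E = Rinv →
      opAt 3 1 R * opAt 3 0 (E * F) *
          (opAt 3 1 F * opAt 3 0 (E * F) * opAt 3 1 Finv) =
        opAt 3 0 (E * F) * (opAt 3 1 F * opAt 3 0 (E * F) * opAt 3 1 Finv) *
          opAt 3 1 R :=
  alpha_representation_general R Rinv F Finv hRyb hFyb hR hF hcomp

end
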